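/- Comparison test: let K be a compact line and G : K → ℝ a nondecreasing amenable function. If f, g : K → ℝ are G-integrable and |f(x)| ≤ g(x) for every x ∈ K, then |f| is G-integrable. -/

import Mathlib

/-!
The integral of `|f|` is `|f(0)| G(0) + V`, where `V` is the total variation on `K` of the
primitive `F(x) = ∫₀ˣ f dG`. Domination gives `|F(v) - F(u)| ≤ Φ(v) - Φ(u)` for the primitive `Φ`
of `g`, so `V` is finite. By the Saks–Henstock lemma the sum of `|f(tᵢ) ΔGᵢ - ΔFᵢ|` over a fine
partition is small, so the Riemann sum of `|f|` is close to the variation sum of `F` over the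
partition; a gauge that forces the points of a nearly extremal division to be tags makes that
variation sum close to `V`.
-/

open Set Filter MeasureTheory

/-- A tagged partition of the interval `[a,b]` in a linear order `K`. -/
structure TaggedPartition (K : Type*) [LinearOrder K] (a b : K) where
  n : ℕ
  x : ℕ → K
  t : ℕ → K
  x_zero : x 0 = a
  x_last : x n = b
  mono : ∀ i < n, x i ≤ x (i + 1)
  tag_mem : ∀ i < n, t (i + 1) ∈ Set.Icc (x i) (x (i + 1))

/-- A gauge on the interval `[a,b]` of `K`: each point of `[a,b]` is assigned a
relatively open subinterval of `[a,b]` containing it. -/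
def IsGauge (K : Type*) [LinearOrder K] [TopologicalSpace K] (a b : K) (δ : K → Set K) : Prop :=
  ∀ x ∈ Set.Icc a b, x ∈ δ x ∧ (δ x).OrdConnected ∧ ∃ U, IsOpen U ∧ δ x = U ∩ Set.Icc a b

/-- A tagged partition is `δ`-fine when `(x_{i-1}, x_i] ⊆ δ(t_i)` for all `i`. -/
def TaggedPartition.IsFine {K : Type*} [LinearOrder K] {a b : K}
    (P : TaggedPartition K a b) (δ : K → Set K) : Prop :=
  ∀ i < P.n, Set.Ioc (P.x i) (P.x (i + 1)) ⊆ δ (P.t (i + 1))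

/-- The Riemann sum `S(f,G,P) = f(a)G(a) + Σ f(t_i)(G(x_i) - G(x_{i-1}))`. -/
noncomputable def riemannSum {K : Type*} [LinearOrder K] {a b : K}
    (f G : K → ℝ) (P : TaggedPartition K a b) : ℝ :=
  f a * G a + ∑ i ∈ Finset.range P.n, f (P.t (i + 1)) * (G (P.x (i + 1)) - G (P.x i))

/-- `f` has Kurzweil–Stieltjes integral `A` with respect to `G` over `[a,b]`. -/
def HasIntegral {K : Type*} [LinearOrder K] [TopologicalSpace K]
    (f G : K → ℝ) (a b : K) (A : ℝ) : Prop :=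
  ∀ ε : ℝ, 0 < ε → ∃ δ : K → Set K, IsGauge K a b δ ∧
    ∀ P : TaggedPartition K a b, P.IsFine δ → |riemannSum f G P - A| < ε

/-- `G` is amenable: right-continuous everywhere, and regulated (left limits exist at
left-dense points, right limits at right-dense points). -/
def Amenable {K : Type*} [LinearOrder K] [TopologicalSpace K] [BoundedOrder K]
    (G : K → ℝ) : Prop :=
  (∀ x : K, ContinuousWithinAt G (Set.Ici x) x) ∧
  (∀ x : K, x ≠ ⊥ → (¬ ∃ y, y ⋖ x) → ∃ l, Filter.Tendsto G (nhdsWithin x (Set.Iio x)) (nhds l)) ∧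
  (∀ x : K, x ≠ ⊤ → (¬ ∃ y, x ⋖ y) → ∃ l, Filter.Tendsto G (nhdsWithin x (Set.Ioi x)) (nhds l))

open Classical in
/-- `L_G(x)`: `0` at the least element, `G` of the immediate predecessor if `x` is
left-isolated, and the left limit of `G` at `x` if `x` is left-dense. -/
noncomputable def Lfun {K : Type*} [LinearOrder K] [TopologicalSpace K] [BoundedOrder K]
    (G : K → ℝ) (x : K) : ℝ :=
  if x = ⊥ then 0
  else if h : ∃ y, y ⋖ x then G h.choose
  else Function.leftLim G x

/-- The set of variation sums of `G` over divisions of `[a,b]`. -/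
def varSums {K : Type*} [LinearOrder K] (G : K → ℝ) (a b : K) : Set ℝ :=
  {v | ∃ (n : ℕ) (x : ℕ → K), x 0 = a ∧ x n = b ∧ (∀ i < n, x i ≤ x (i + 1)) ∧
        v = ∑ i ∈ Finset.range n, |G (x (i + 1)) - G (x i)|}

/-- `S` is null for the outer measure induced by `μ` via covers by countably many
open intervals. -/
def GNull {K : Type*} [LinearOrder K] [TopologicalSpace K] [MeasurableSpace K]
    (μ : MeasureTheory.Measure K) (S : Set K) : Prop :=
  ∀ ε : ℝ, 0 < ε → ∃ I : ℕ → Set K, (∀ n, IsOpen (I n) ∧ (I n).OrdConnected) ∧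
    S ⊆ ⋃ n, I n ∧ ∑' n, μ (I n) < ENNReal.ofReal ε

lemma Finset.sum_range_two_mul {M : Type*} [AddCommMonoid M] (F : ℕ → M) (n : ℕ) :
    ∑ j ∈ Finset.range (2 * n), F j = ∑ i ∈ Finset.range n, (F (2 * i) + F (2 * i + 1)) := by
  induction n with
  | zero => simp
  | succ n ih =>
    rw [show 2 * (n + 1) = 2 * n + 1 + 1 by omega, Finset.sum_range_succ, Finset.sum_range_succ,
      ih, Finset.sum_range_succ, add_assoc]

lemma Finset.sum_abs_le_two_mul {ι : Type*} (s : Finset ι) (a : ι → ℝ) {c : ℝ}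
    (h : ∀ t ⊆ s, |∑ i ∈ t, a i| ≤ c) : ∑ i ∈ s, |a i| ≤ 2 * c := by
  rw [← Finset.sum_filter_add_sum_filter_not s (fun i => 0 ≤ a i),
    Finset.sum_congr rfl fun i hi => abs_of_nonneg (Finset.mem_filter.mp hi).2,
    Finset.sum_congr rfl fun i hi => abs_of_neg (not_le.mp (Finset.mem_filter.mp hi).2),
    Finset.sum_neg_distrib]
  have h₁ := (le_abs_self _).trans (h _ (Finset.filter_subset (fun i => 0 ≤ a i) s))
  have h₂ := (neg_le_abs _).trans (h _ (Finset.filter_subset (fun i => ¬ 0 ≤ a i) s))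
  linarith

section Partitions

variable {K : Type*} [LinearOrder K]

lemma monotoneOn_Iic_of_le_succ {x : ℕ → K} {n : ℕ} (hx : ∀ i < n, x i ≤ x (i + 1)) :
    MonotoneOn x (Set.Iic n) := by
  have hmono : Monotone fun i => x (min i n) := monotone_nat_of_le_succ fun i => by
    rcases lt_or_ge i n with hi | hi
    · simpa [min_eq_left hi.le, min_eq_left (Nat.succ_le_of_lt hi)] using hx i hi
    · simp [min_eq_right hi, min_eq_right (hi.trans i.le_succ)]
  intro i hi j hj hij
  simpa [min_eq_left (Set.mem_Iic.mp hi), min_eq_left (Set.mem_Iic.mp hj)] using hmono hij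

lemma mem_Icc_of_le_succ {x : ℕ → K} {n : ℕ} (hx : ∀ i < n, x i ≤ x (i + 1)) {i : ℕ}
    (hi : i ≤ n) : x i ∈ Set.Icc (x 0) (x n) :=
  ⟨monotoneOn_Iic_of_le_succ hx (Set.mem_Iic.mpr (Nat.zero_le n)) hi (Nat.zero_le i),
    monotoneOn_Iic_of_le_succ hx hi (Set.mem_Iic.mpr le_rfl) hi⟩

namespace TaggedPartition

variable {a b c : K}

lemma x_mem_Icc (P : TaggedPartition K a b) {i : ℕ} (hi : i ≤ P.n) :
    P.x i ∈ Set.Icc a b := by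
  simpa only [P.x_zero, P.x_last] using mem_Icc_of_le_succ P.mono hi

lemma left_le_right (P : TaggedPartition K a b) : a ≤ b :=
  (P.x_mem_Icc le_rfl).1.trans (P.x_mem_Icc le_rfl).2

lemma exists_mem_Ioc (P : TaggedPartition K a b) {d : K} (hd : d ∈ Set.Icc a b) :
    d = a ∨ ∃ i < P.n, d ∈ Set.Ioc (P.x i) (P.x (i + 1)) := by
  rcases hd.1.eq_or_lt with rfl | had
  · exact Or.inl rfl
  have hdn : d ≤ P.x P.n := P.x_last.symm ▸ hd.2
  have hex : ∃ k, d ≤ P.x k := ⟨P.n, hdn⟩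
  have hk0 : Nat.find hex ≠ 0 := fun h0 => by
    have := Nat.find_spec hex
    rw [h0, P.x_zero] at this
    exact this.not_gt had
  have hkn : Nat.find hex ≤ P.n := Nat.find_min' hex hdn
  refine Or.inr ⟨Nat.find hex - 1, by omega, not_le.mp (Nat.find_min hex (by omega)), ?_⟩
  rw [Nat.sub_add_cancel (Nat.one_le_iff_ne_zero.mpr hk0)]
  exact Nat.find_spec hex

lemma IsFine.mono {P : TaggedPartition K a b} {δ δ' : K → Set K} (hP : P.IsFine δ)
    (h : ∀ x, δ x ⊆ δ' x) : P.IsFine δ' :=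
  fun i hi => (hP i hi).trans (h _)

def single (hab : a ≤ b) {t : K} (ht : t ∈ Set.Icc a b) : TaggedPartition K a b where
  n := 1
  x i := if i = 0 then a else b
  t _ := t
  x_zero := rfl
  x_last := rfl
  mono i hi := by
    obtain rfl : i = 0 := by omega
    simpa using hab
  tag_mem i hi := by
    obtain rfl : i = 0 := by omega
    simpa using ht

lemma riemannSum_single (f G : K → ℝ) (hab : a ≤ b) {t : K} (ht : t ∈ Set.Icc a b) :
    riemannSum f G (single hab ht) = f a * G a + f t * (G b - G a) := by
  simp [riemannSum, single]

lemma isFine_single {hab : a ≤ b} {t : K} {ht : t ∈ Set.Icc a b} {δ : K → Set K} :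
    (single hab ht).IsFine δ ↔ Set.Ioc a b ⊆ δ t := by
  refine ⟨fun h => by simpa [single] using h 0 one_pos, fun h i hi => ?_⟩
  obtain rfl : i = 0 := by simpa [single] using hi
  simpa [single] using h

lemma riemannSum_of_left_eq_right (f G : K → ℝ) (P : TaggedPartition K c c) :
    riemannSum f G P = f c * G c := by
  have hx : ∀ i ≤ P.n, P.x i = c := fun i hi => le_antisymm (P.x_mem_Icc hi).2 (P.x_mem_Icc hi).1
  rw [riemannSum, Finset.sum_eq_zero fun i hi => ?_, add_zero]
  have hi := Finset.mem_range.mp hi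
  rw [hx i hi.le, hx (i + 1) hi, sub_self, mul_zero]

section Append

variable (P : TaggedPartition K a b) (Q : TaggedPartition K b c)

def append : TaggedPartition K a c where
  n := P.n + Q.n
  x i := if i ≤ P.n then P.x i else Q.x (i - P.n)
  t i := if i ≤ P.n then P.t i else Q.t (i - P.n)
  x_zero := by simp [P.x_zero]
  x_last := by
    rcases Nat.eq_zero_or_pos Q.n with h | h
    · simp [h, P.x_last, ← Q.x_zero, ← Q.x_last]
    · simp [show ¬ P.n + Q.n ≤ P.n by omega, Q.x_last]
  mono i hi := by
    rcases lt_or_ge i P.n with h | h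
    · simpa [h.le, Nat.succ_le_of_lt h] using P.mono i h
    · have hQ := Q.mono (i - P.n) (by omega)
      rcases h.eq_or_lt with rfl | h
      · simpa [P.x_last, ← Q.x_zero] using hQ
      · simpa [show ¬ i ≤ P.n by omega, show ¬ i + 1 ≤ P.n by omega,
          show i + 1 - P.n = i - P.n + 1 by omega] using hQ
  tag_mem i hi := by
    rcases lt_or_ge i P.n with h | h
    · simpa [h.le, Nat.succ_le_of_lt h] using P.tag_mem i h
    · have hQ := Q.tag_mem (i - P.n) (by omega)
      rcases h.eq_or_lt with rfl | h
      · simpa [P.x_last, ← Q.x_zero] using hQ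
      · simpa [show ¬ i ≤ P.n by omega, show ¬ i + 1 ≤ P.n by omega,
          show i + 1 - P.n = i - P.n + 1 by omega] using hQ

lemma append_n : (P.append Q).n = P.n + Q.n := rfl

lemma append_x_of_le {i : ℕ} (hi : i ≤ P.n) : (P.append Q).x i = P.x i := if_pos hi

lemma append_x_add (i : ℕ) : (P.append Q).x (P.n + i) = Q.x i := by
  rcases Nat.eq_zero_or_pos i with rfl | hi
  · simp [append, P.x_last, Q.x_zero]
  · simp [append, show ¬ P.n + i ≤ P.n by omega]

lemma append_t_of_le {i : ℕ} (hi : i ≤ P.n) : (P.append Q).t i = P.t i := if_pos hi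

lemma append_t_add_succ (i : ℕ) : (P.append Q).t (P.n + i + 1) = Q.t (i + 1) := by
  simp [append, show P.n + i + 1 - P.n = i + 1 by omega]

variable {P Q} in
lemma IsFine.append {δ : K → Set K} (hP : P.IsFine δ) (hQ : Q.IsFine δ) :
    (P.append Q).IsFine δ := by
  intro i hi
  rcases lt_or_ge i P.n with h | h
  · rw [append_x_of_le _ _ h.le, append_x_of_le _ _ h, append_t_of_le _ _ h]
    exact hP i h
  · obtain ⟨k, rfl⟩ := Nat.exists_eq_add_of_le h
    rw [append_x_add, add_assoc, append_x_add, ← add_assoc, append_t_add_succ]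
    exact hQ k (by rw [append_n] at hi; omega)

lemma riemannSum_append (f G : K → ℝ) :
    riemannSum f G (P.append Q) = riemannSum f G P + riemannSum f G Q - f b * G b := by
  have hP : ∀ i ∈ Finset.range P.n, f ((P.append Q).t (i + 1)) *
      (G ((P.append Q).x (i + 1)) - G ((P.append Q).x i))
        = f (P.t (i + 1)) * (G (P.x (i + 1)) - G (P.x i)) := fun i hi => by
    have hi := Finset.mem_range.mp hi
    rw [append_x_of_le _ _ hi.le, append_x_of_le _ _ hi, append_t_of_le _ _ hi]
  have hQ : ∀ i ∈ Finset.range Q.n, f ((P.append Q).t (P.n + i + 1)) *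
      (G ((P.append Q).x (P.n + i + 1)) - G ((P.append Q).x (P.n + i)))
        = f (Q.t (i + 1)) * (G (Q.x (i + 1)) - G (Q.x i)) := fun i _ => by
    rw [append_x_add, add_assoc, append_x_add, ← add_assoc, append_t_add_succ]
  rw [riemannSum, append_n, Finset.sum_range_add, Finset.sum_congr rfl hP,
    Finset.sum_congr rfl hQ, riemannSum, riemannSum]
  ring

end Append

def splitAtTags (P : TaggedPartition K a b) : TaggedPartition K a b where
  n := 2 * P.n
  x j := if j % 2 = 0 then P.x (j / 2) else P.t ((j + 1) / 2)
  t j := P.t ((j + 1) / 2)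
  x_zero := by simp [P.x_zero]
  x_last := by simp [P.x_last]
  mono j hj := by
    obtain ⟨i, rfl | rfl⟩ := Nat.even_or_odd' j
    · simpa [Nat.mul_add_mod, show (2 * i + 1 + 1) / 2 = i + 1 by omega]
        using (P.tag_mem i (by omega)).1
    · simpa [Nat.mul_add_mod, show (2 * i + 1 + 1) = 2 * (i + 1) by ring]
        using (P.tag_mem i (by omega)).2
  tag_mem j hj := by
    obtain ⟨i, rfl | rfl⟩ := Nat.even_or_odd' j
    · simpa [Nat.mul_add_mod, show (2 * i + 1 + 1) / 2 = i + 1 by omega]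
        using (P.tag_mem i (by omega)).1
    · simpa [Nat.mul_add_mod, show (2 * i + 1 + 1) = 2 * (i + 1) by ring,
        show (2 * (i + 1) + 1) / 2 = i + 1 by omega] using (P.tag_mem i (by omega)).2

section SplitAtTags

variable (P : TaggedPartition K a b)

lemma splitAtTags_n : P.splitAtTags.n = 2 * P.n := rfl

lemma splitAtTags_x_two_mul (i : ℕ) : P.splitAtTags.x (2 * i) = P.x i := by
  simp [splitAtTags]

lemma splitAtTags_x_two_mul_add_one (i : ℕ) : P.splitAtTags.x (2 * i + 1) = P.t (i + 1) := by
  simp [splitAtTags, show (2 * i + 1 + 1) / 2 = i + 1 by omega]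

lemma splitAtTags_t_two_mul_add_one (i : ℕ) : P.splitAtTags.t (2 * i + 1) = P.t (i + 1) := by
  simp [splitAtTags, show (2 * i + 1 + 1) / 2 = i + 1 by omega]

lemma splitAtTags_t_two_mul_add_two (i : ℕ) : P.splitAtTags.t (2 * i + 2) = P.t (i + 1) := by
  simp [splitAtTags, show (2 * i + 2 + 1) / 2 = i + 1 by omega]

variable {P} in
lemma IsFine.splitAtTags {δ : K → Set K} (hP : P.IsFine δ) : P.splitAtTags.IsFine δ := by
  intro j hj
  rw [splitAtTags_n] at hj
  obtain ⟨i, rfl | rfl⟩ := Nat.even_or_odd' j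
  · rw [splitAtTags_x_two_mul, splitAtTags_x_two_mul_add_one, splitAtTags_t_two_mul_add_one]
    exact (Set.Ioc_subset_Ioc_right (P.tag_mem i (by omega)).2).trans (hP i (by omega))
  · rw [splitAtTags_x_two_mul_add_one, show 2 * i + 1 + 1 = 2 * (i + 1) by ring,
      splitAtTags_x_two_mul, show 2 * (i + 1) = 2 * i + 2 by ring, splitAtTags_t_two_mul_add_two]
    exact (Set.Ioc_subset_Ioc_left (P.tag_mem i (by omega)).1).trans (hP i (by omega))

lemma riemannSum_splitAtTags (f G : K → ℝ) :
    riemannSum f G P.splitAtTags = riemannSum f G P := by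
  rw [riemannSum, riemannSum, splitAtTags_n, Finset.sum_range_two_mul]
  congr 1
  refine Finset.sum_congr rfl fun i _ => ?_
  rw [splitAtTags_t_two_mul_add_one, show 2 * i + 1 + 1 = 2 * i + 2 by ring,
    splitAtTags_t_two_mul_add_two, splitAtTags_x_two_mul, splitAtTags_x_two_mul_add_one,
    show 2 * i + 2 = 2 * (i + 1) by ring, splitAtTags_x_two_mul]
  ring

lemma exists_splitAtTags_x_eq {δ : K → Set K} (hP : P.IsFine δ) {d : K} (hd : d ∈ Set.Icc a b)
    (hsep : ∀ t, d ∈ δ t → d = t) : ∃ j ≤ P.splitAtTags.n, P.splitAtTags.x j = d := by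
  rcases P.exists_mem_Ioc hd with rfl | ⟨i, hi, hdi⟩
  · exact ⟨0, Nat.zero_le _, P.splitAtTags.x_zero⟩
  · refine ⟨2 * i + 1, by rw [splitAtTags_n]; omega, ?_⟩
    rw [splitAtTags_x_two_mul_add_one, hsep _ (hP i hi hdi)]

end SplitAtTags

lemma exists_isFine_concat (f G : K → ℝ) {x : ℕ → K} {δ : K → Set K} {p : ℕ → ℝ → Prop}
    {k : ℕ} (h0 : x 0 = a) (hk : x k = b)
    (h : ∀ i < k, ∃ Q : TaggedPartition K (x i) (x (i + 1)), Q.IsFine δ ∧ p i (riemannSum f G Q)) :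
    ∃ P : TaggedPartition K a b, P.IsFine δ ∧ ∃ r : ℕ → ℝ, (∀ i < k, p i (r i)) ∧
      riemannSum f G P = f a * G a + ∑ i ∈ Finset.range k, (r i - f (x i) * G (x i)) := by
  subst h0 hk
  induction k with
  | zero =>
    exact ⟨.single le_rfl ⟨le_rfl, le_rfl⟩, isFine_single.mpr (by simp),
      fun _ => 0, by simp, by simp [riemannSum_of_left_eq_right]⟩
  | succ k ih =>
    obtain ⟨P, hP, r, hr, hPr⟩ := ih fun i hi => h i (by omega)
    obtain ⟨Q, hQ, hpQ⟩ := h k (by omega)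
    refine ⟨P.append Q, hP.append hQ, fun i => if i < k then r i else riemannSum f G Q,
      fun i hi => ?_, ?_⟩
    · dsimp only
      split_ifs with hik
      · exact hr i hik
      · obtain rfl : i = k := by omega
        exact hpQ
    · have hsum : ∑ i ∈ Finset.range k, ((if i < k then r i else riemannSum f G Q)
          - f (x i) * G (x i)) = ∑ i ∈ Finset.range k, (r i - f (x i) * G (x i)) :=
        Finset.sum_congr rfl fun i hi => by rw [if_pos (Finset.mem_range.mp hi)]
      dsimp only
      rw [riemannSum_append, hPr, Finset.sum_range_succ, hsum,
        if_neg (lt_irrefl k)]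
      ring

end TaggedPartition

end Partitions

section Variation

variable {K : Type*} [LinearOrder K] {a b : K}

lemma sum_abs_sub_le_sum_Ico (s : ℕ → ℝ) {φ : ℕ → ℕ} {m : ℕ} (hφ : ∀ j < m, φ j ≤ φ (j + 1)) :
    ∑ j ∈ Finset.range m, |s (φ (j + 1)) - s (φ j)|
      ≤ ∑ i ∈ Finset.Ico (φ 0) (φ m), |s (i + 1) - s i| := by
  induction m with
  | zero => simp
  | succ m ih =>
    rw [Finset.sum_range_succ, ← Finset.sum_Ico_consecutive _
      (monotoneOn_Iic_of_le_succ hφ (Set.mem_Iic.mpr (Nat.zero_le _))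
        (Set.mem_Iic.mpr m.le_succ) (Nat.zero_le m)) (hφ m m.lt_succ_self)]
    refine add_le_add (ih fun j hj => hφ j (by omega)) ?_
    rw [← Finset.sum_Ico_sub _ (hφ m m.lt_succ_self)]
    exact Finset.abs_sum_le_sum_abs _ _

lemma sum_abs_sub_le_of_refinement (F : K → ℝ) {n m : ℕ} {x y : ℕ → K}
    (hx : ∀ i < n, x i ≤ x (i + 1)) (hy : ∀ j < m, y j ≤ y (j + 1))
    (hyx : ∀ j ≤ m, ∃ i, i ≤ n ∧ x i = y j) :
    ∑ j ∈ Finset.range m, |F (y (j + 1)) - F (y j)|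
      ≤ ∑ i ∈ Finset.range n, |F (x (i + 1)) - F (x i)| := by
  -- Taking the first index at which `x` reaches `y j` makes `φ` monotone.
  let φ : ℕ → ℕ := fun j => if h : ∃ i, i ≤ n ∧ x i = y j then Nat.find h else 0
  have hφ : ∀ j ≤ m, φ j ≤ n ∧ x (φ j) = y j := fun j hj => by
    simpa only [φ, dif_pos (hyx j hj)] using Nat.find_spec (hyx j hj)
  have hφmin : ∀ j ≤ m, ∀ i ≤ n, x i = y j → φ j ≤ i := fun j hj i hi hxi => by
    simpa only [φ, dif_pos (hyx j hj)] using Nat.find_min' (hyx j hj) ⟨hi, hxi⟩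
  have hφmono : ∀ j < m, φ j ≤ φ (j + 1) := fun j hj => by
    by_contra! hlt
    obtain ⟨hφj, hxj⟩ := hφ j hj.le
    obtain ⟨hφj', hxj'⟩ := hφ (j + 1) hj
    have hle : x (φ (j + 1)) ≤ x (φ j) := monotoneOn_Iic_of_le_succ hx hφj' hφj hlt.le
    rw [hxj', hxj] at hle
    refine (hφmin j hj.le _ hφj' ?_).not_gt hlt
    rw [hxj']
    exact le_antisymm hle (hy j hj)
  calc ∑ j ∈ Finset.range m, |F (y (j + 1)) - F (y j)|
      = ∑ j ∈ Finset.range m, |F (x (φ (j + 1))) - F (x (φ j))| :=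
        Finset.sum_congr rfl fun j hj => by
          rw [(hφ j (Finset.mem_range.mp hj).le).2, (hφ (j + 1) (Finset.mem_range.mp hj)).2]
    _ ≤ ∑ i ∈ Finset.Ico (φ 0) (φ m), |F (x (i + 1)) - F (x i)| :=
        sum_abs_sub_le_sum_Ico (fun i => F (x i)) hφmono
    _ ≤ ∑ i ∈ Finset.range n, |F (x (i + 1)) - F (x i)| :=
        Finset.sum_le_sum_of_subset_of_nonneg (fun i hi => Finset.mem_range.mpr
          ((Finset.mem_Ico.mp hi).2.trans_le (hφ m le_rfl).1)) fun _ _ _ => abs_nonneg _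

lemma varSums_nonempty (F : K → ℝ) (hab : a ≤ b) : (varSums F a b).Nonempty :=
  ⟨_, 1, fun i => if i = 0 then a else b, rfl, rfl, fun i hi => by
    obtain rfl : i = 0 := by omega
    simpa using hab, rfl⟩

lemma bddAbove_varSums_of_abs_sub_le {F Φ : K → ℝ}
    (h : ∀ u v, a ≤ u → u ≤ v → v ≤ b → |F v - F u| ≤ Φ v - Φ u) :
    BddAbove (varSums F a b) := by
  refine ⟨Φ b - Φ a, ?_⟩
  rintro _ ⟨n, x, hx0, hxn, hx, rfl⟩
  have hmem : ∀ i ≤ n, x i ∈ Set.Icc a b := fun i hi => hx0 ▸ hxn ▸ mem_Icc_of_le_succ hx hi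
  calc ∑ i ∈ Finset.range n, |F (x (i + 1)) - F (x i)|
      ≤ ∑ i ∈ Finset.range n, (Φ (x (i + 1)) - Φ (x i)) := Finset.sum_le_sum fun i hi => by
        have hi := Finset.mem_range.mp hi
        exact h _ _ (hmem i hi.le).1 (hx i hi) (hmem (i + 1) hi).2
    _ = Φ b - Φ a := by rw [Finset.sum_range_sub (fun i => Φ (x i)), hx0, hxn]

end Variation

section RiemannSumBounds

variable {K : Type*} [LinearOrder K] {a b : K} {f g G : K → ℝ}

lemma abs_riemannSum_sub_le_of_abs_le (hG : Monotone G) (hdom : ∀ x, |f x| ≤ g x)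
    (P : TaggedPartition K a b) :
    |riemannSum f G P - f a * G a| ≤ riemannSum g G P - g a * G a := by
  rw [riemannSum, riemannSum, add_sub_cancel_left, add_sub_cancel_left]
  refine (Finset.abs_sum_le_sum_abs _ _).trans (Finset.sum_le_sum fun i hi => ?_)
  have hΔ : 0 ≤ G (P.x (i + 1)) - G (P.x i) :=
    sub_nonneg.mpr (hG (P.mono i (Finset.mem_range.mp hi)))
  rw [abs_mul, abs_of_nonneg hΔ]
  exact mul_le_mul_of_nonneg_right (hdom _) hΔ

lemma abs_riemannSum_abs_sub_le (hG : Monotone G) (F : K → ℝ) (P : TaggedPartition K a b) :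
    |riemannSum (fun x => |f x|) G P
        - (|f a| * G a + ∑ i ∈ Finset.range P.n, |F (P.x (i + 1)) - F (P.x i)|)|
      ≤ ∑ i ∈ Finset.range P.n,
          |f (P.t (i + 1)) * (G (P.x (i + 1)) - G (P.x i)) - (F (P.x (i + 1)) - F (P.x i))| := by
  rw [riemannSum, add_sub_add_left_eq_sub, ← Finset.sum_sub_distrib]
  refine (Finset.abs_sum_le_sum_abs _ _).trans (Finset.sum_le_sum fun i hi => ?_)
  have hΔ : 0 ≤ G (P.x (i + 1)) - G (P.x i) :=
    sub_nonneg.mpr (hG (P.mono i (Finset.mem_range.mp hi)))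
  rw [← abs_of_nonneg hΔ, ← abs_mul, abs_of_nonneg hΔ]
  exact abs_abs_sub_abs_le_abs_sub _ _

end RiemannSumBounds

namespace IsGauge

variable {K : Type*} [LinearOrder K] [TopologicalSpace K] {a b u v : K} {δ δ' : K → Set K}

lemma inter (hδ : IsGauge K a b δ) (hδ' : IsGauge K a b δ') :
    IsGauge K a b fun x => δ x ∩ δ' x := by
  intro x hx
  obtain ⟨hx₁, hc₁, U₁, hU₁, hδx⟩ := hδ x hx
  obtain ⟨hx₂, hc₂, U₂, hU₂, hδ'x⟩ := hδ' x hx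
  refine ⟨⟨hx₁, hx₂⟩, hc₁.inter hc₂, U₁ ∩ U₂, hU₁.inter hU₂, ?_⟩
  show δ x ∩ δ' x = _
  rw [hδx, hδ'x]
  ext; simp only [Set.mem_inter_iff]; tauto

lemma restrict (hδ : IsGauge K a b δ) (hsub : Set.Icc u v ⊆ Set.Icc a b) :
    IsGauge K u v fun x => δ x ∩ Set.Icc u v := by
  intro x hx
  obtain ⟨hxδ, hc, U, hU, hδx⟩ := hδ x (hsub hx)
  refine ⟨⟨hxδ, hx⟩, hc.inter Set.ordConnected_Icc, U, hU, ?_⟩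
  show δ x ∩ Set.Icc u v = _
  rw [hδx, Set.inter_assoc, Set.inter_eq_right.mpr hsub]

lemma exists_seq_refining {δ : ℕ → K → Set K} (hδ : ∀ n, IsGauge K a b (δ n)) :
    ∃ Δ : ℕ → K → Set K, (∀ n, IsGauge K a b (Δ n)) ∧ ∀ k n, k ≤ n → ∀ x, Δ n x ⊆ δ k x := by
  let Δ : ℕ → K → Set K := fun n => Nat.rec (δ 0) (fun k D x => D x ∩ δ (k + 1) x) n
  refine ⟨Δ, fun n => ?_, fun k n hkn => ?_⟩
  · induction n with
    | zero => exact hδ 0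
    | succ n ih => exact ih.inter (hδ (n + 1))
  · induction n, hkn using Nat.le_induction with
    | base =>
      cases k with
      | zero => exact fun x => subset_rfl
      | succ k => exact fun x => Set.inter_subset_right
    | succ n _ ih => exact fun x => Set.inter_subset_left.trans (ih x)

lemma exists_separating [OrderTopology K] (hδ : IsGauge K a b δ) (D : Finset K) :
    ∃ δ' : K → Set K, IsGauge K a b δ' ∧ (∀ x, δ' x ⊆ δ x) ∧ ∀ x, ∀ d ∈ D, d ∈ δ' x → d = x := by
  let W : K → Set K := fun x =>
    (⋂ d ∈ D.filter (· < x), Set.Ioi d) ∩ ⋂ d ∈ D.filter (x < ·), Set.Iio d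
  refine ⟨fun x => δ x ∩ W x, fun x hx => ?_, fun x => Set.inter_subset_left, fun x d hd hdx => ?_⟩
  · obtain ⟨hxδ, hc, U, hU, hδx⟩ := hδ x hx
    have hxW : x ∈ W x := by simp [W]
    refine ⟨⟨hxδ, hxW⟩, hc.inter ((Set.ordConnected_biInter fun _ _ => Set.ordConnected_Ioi).inter
      (Set.ordConnected_biInter fun _ _ => Set.ordConnected_Iio)), U ∩ W x,
      hU.inter ((isOpen_biInter_finset fun _ _ => isOpen_Ioi).inter
        (isOpen_biInter_finset fun _ _ => isOpen_Iio)), ?_⟩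
    show δ x ∩ W x = _
    rw [hδx, Set.inter_right_comm]
  · by_contra hne
    obtain ⟨-, hdW⟩ := hdx
    simp only [W, Set.mem_inter_iff, Set.mem_iInter, Finset.mem_filter] at hdW
    rcases lt_or_gt_of_ne hne with h | h
    · exact lt_irrefl d (hdW.1 d ⟨hd, h⟩)
    · exact lt_irrefl d (hdW.2 d ⟨hd, h⟩)

end IsGauge

/-- Cousin's lemma. -/
theorem IsGauge.exists_isFine {K : Type*} [LinearOrder K] [TopologicalSpace K] [OrderTopology K]
    [CompactIccSpace K] {u v : K} {δ : K → Set K} (hδ : IsGauge K u v δ) (huv : u ≤ v) :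
    ∃ P : TaggedPartition K u v, P.IsFine δ := by
  let S : Set K := {c | c ∈ Set.Icc u v ∧ ∃ P : TaggedPartition K u c, P.IsFine δ}
  have hSsub : S ⊆ Set.Icc u v := fun c hc => hc.1
  have extend : ∀ c ∈ S, ∀ e t, c ≤ e → e ≤ v → (ht : t ∈ Set.Icc c e) →
      Set.Ioc c e ⊆ δ t → e ∈ S := by
    rintro c ⟨hc, P, hP⟩ e t hce hev ht hδt
    exact ⟨⟨hc.1.trans hce, hev⟩, P.append (.single hce ht),
      hP.append (TaggedPartition.isFine_single.mpr hδt)⟩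
  have hS : S.Nonempty := ⟨u, ⟨le_rfl, huv⟩, .single le_rfl ⟨le_rfl, le_rfl⟩,
    TaggedPartition.isFine_single.mpr (by simp)⟩
  have hcl : closure S ⊆ Set.Icc u v := closure_minimal hSsub isClosed_Icc
  obtain ⟨m, hmS, hmax⟩ :=
    (isCompact_Icc.of_isClosed_subset isClosed_closure hcl).exists_isGreatest hS.closure
  have hm := hcl hmS
  obtain ⟨hmδ, hmc, U, hU, hδm⟩ := hδ m hm
  have hmU : m ∈ U := (hδm ▸ hmδ).1
  obtain ⟨c, hcU, hcS⟩ := mem_closure_iff.mp hmS U hU hmU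
  have hcm : c ≤ m := hmax (subset_closure hcS)
  have hmS : m ∈ S := extend c hcS m m hcm hm.2 ⟨hcm, le_rfl⟩ fun z hz =>
    hmc.out (hδm ▸ ⟨hcU, hSsub hcS⟩) hmδ ⟨hz.1.le, hz.2⟩
  rcases hm.2.eq_or_lt with rfl | hmv
  · exact hmS.2
  -- Push past `m`: to `min r v` if nothing lies in between, else to a point of `U` beyond `m`.
  obtain ⟨r, hmr, hrU⟩ := exists_Ico_subset_of_mem_nhds (hU.mem_nhds hmU) ⟨v, hmv⟩
  have hmd : m < min r v := lt_min hmr hmv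
  have hdv : min r v ≤ v := min_le_right r v
  obtain ⟨e, heS, hme⟩ : ∃ e ∈ S, m < e := by
    rcases (Set.Ioo m (min r v)).eq_empty_or_nonempty with hemp | ⟨e, hme, hed⟩
    · refine ⟨_, extend m hmS _ _ hmd.le hdv ⟨hmd.le, le_rfl⟩ fun z hz => ?_, hmd⟩
      obtain rfl : z = min r v := hz.2.eq_or_lt.resolve_right fun h =>
        (Set.eq_empty_iff_forall_notMem.mp hemp) z ⟨hz.1, h⟩
      exact (hδ _ ⟨hm.1.trans hmd.le, hdv⟩).1
    · refine ⟨e, extend m hmS e m hme.le (hed.le.trans hdv) ⟨le_rfl, hme.le⟩ fun z hz => ?_, hme⟩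
      rw [hδm]
      exact ⟨hrU ⟨hz.1.le, hz.2.trans_lt (hed.trans_le (min_le_left r v))⟩,
        hm.1.trans hz.1.le, hz.2.trans (hed.le.trans hdv)⟩
  exact absurd (hmax (subset_closure heS)) (not_le.mpr hme)

section Integral

variable {K : Type*} [LinearOrder K] [TopologicalSpace K] {f g G : K → ℝ} {a b u v w : K}
  {A B C : ℝ}

lemma hasIntegral_self (f G : K → ℝ) (c : K) : HasIntegral f G c c (f c * G c) := fun ε hε =>
  ⟨fun _ => Set.Icc c c, fun _ hx => ⟨hx, Set.ordConnected_Icc, Set.univ, isOpen_univ,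
    (Set.univ_inter _).symm⟩, fun P _ => by
      rwa [TaggedPartition.riemannSum_of_left_eq_right, sub_self, abs_zero]⟩

open Classical in
/-- The Kurzweil–Stieltjes integral over `[u, v]`, with junk value `0` when `f` is not
integrable there. -/
noncomputable def ksIntegral (f G : K → ℝ) (u v : K) : ℝ :=
  if h : ∃ A, HasIntegral f G u v A then h.choose else 0

variable [OrderTopology K] [CompactIccSpace K]

namespace HasIntegral

lemma exists_riemannSum_near (hf : HasIntegral f G u v A) (hg : HasIntegral g G u v B)
    (huv : u ≤ v) {ε : ℝ} (hε : 0 < ε) :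
    ∃ P : TaggedPartition K u v, |riemannSum f G P - A| < ε ∧ |riemannSum g G P - B| < ε := by
  obtain ⟨δ, hδ, hA⟩ := hf ε hε
  obtain ⟨δ', hδ', hB⟩ := hg ε hε
  obtain ⟨P, hP⟩ := (hδ.inter hδ').exists_isFine huv
  exact ⟨P, hA P (hP.mono fun _ => Set.inter_subset_left),
    hB P (hP.mono fun _ => Set.inter_subset_right)⟩

lemma unique (hA : HasIntegral f G u v A) (hB : HasIntegral f G u v B) (huv : u ≤ v) :
    A = B := by
  refine eq_of_forall_dist_le fun ε hε => ?_
  obtain ⟨P, hPA, hPB⟩ := hA.exists_riemannSum_near hB huv (half_pos hε)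
  rw [Real.dist_eq, abs_le]
  rw [abs_lt] at hPA hPB
  constructor <;> linarith

lemma ksIntegral_eq (h : HasIntegral f G u v A) (huv : u ≤ v) : ksIntegral f G u v = A := by
  have hex : ∃ A, HasIntegral f G u v A := ⟨A, h⟩
  rw [ksIntegral, dif_pos hex]
  exact hex.choose_spec.unique h huv

lemma abs_sub_le_of_abs_le (hA : HasIntegral f G u v A) (hB : HasIntegral g G u v B)
    (huv : u ≤ v) (hG : Monotone G) (hdom : ∀ x, |f x| ≤ g x) :
    |A - f u * G u| ≤ B - g u * G u := by
  refine le_of_forall_pos_lt_add fun ε hε => ?_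
  obtain ⟨P, hPA, hPB⟩ := hA.exists_riemannSum_near hB huv (half_pos hε)
  have hP := abs_riemannSum_sub_le_of_abs_le hG hdom P
  have htri := abs_sub_le A (riemannSum f G P) (f u * G u)
  rw [abs_sub_comm A (riemannSum f G P)] at htri
  rw [abs_lt] at hPB
  linarith

lemma add_adjacent (hA : HasIntegral f G u v A) (hB : HasIntegral f G v w B)
    (hC : HasIntegral f G u w C) (huv : u ≤ v) (hvw : v ≤ w) : C = A + B - f v * G v := by
  refine eq_of_forall_dist_le fun ε hε => ?_
  obtain ⟨δ₁, hδ₁, hA⟩ := hA (ε / 3) (by positivity)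
  obtain ⟨δ₂, hδ₂, hB⟩ := hB (ε / 3) (by positivity)
  obtain ⟨δ, hδ, hC⟩ := hC (ε / 3) (by positivity)
  obtain ⟨P, hP⟩ := (hδ₁.inter (hδ.restrict (Set.Icc_subset_Icc_right hvw))).exists_isFine huv
  obtain ⟨Q, hQ⟩ := (hδ₂.inter (hδ.restrict (Set.Icc_subset_Icc_left huv))).exists_isFine hvw
  have hPQ := hC (P.append Q) ((hP.mono fun _ => Set.inter_subset_right.trans
    Set.inter_subset_left).append (hQ.mono fun _ => Set.inter_subset_right.trans
      Set.inter_subset_left))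
  have hP' := hA P (hP.mono fun _ => Set.inter_subset_left)
  have hQ' := hB Q (hQ.mono fun _ => Set.inter_subset_left)
  rw [TaggedPartition.riemannSum_append] at hPQ
  rw [Real.dist_eq, abs_le]
  rw [abs_lt] at hPQ hP' hQ'
  constructor <;> linarith

lemma cauchy_of_subset (hf : HasIntegral f G a b A) (hau : a ≤ u) (huv : u ≤ v) (hvb : v ≤ b)
    {ε : ℝ} (hε : 0 < ε) :
    ∃ δ, IsGauge K u v δ ∧ ∀ P Q : TaggedPartition K u v, P.IsFine δ → Q.IsFine δ →
      |riemannSum f G P - riemannSum f G Q| < ε := by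
  obtain ⟨δ, hδ, hA⟩ := hf (ε / 2) (half_pos hε)
  have hδ' : ∀ {c d : K}, a ≤ c → d ≤ b → IsGauge K c d fun x => δ x ∩ Set.Icc c d :=
    fun hc hd => hδ.restrict (Set.Icc_subset_Icc hc hd)
  have hfine : ∀ {c d : K} (P : TaggedPartition K c d), P.IsFine (fun x => δ x ∩ Set.Icc c d) →
      P.IsFine δ := fun _ hP => hP.mono fun _ => Set.inter_subset_left
  obtain ⟨L, hL⟩ := (hδ' le_rfl (huv.trans hvb)).exists_isFine hau
  obtain ⟨R, hR⟩ := (hδ' (hau.trans huv) le_rfl).exists_isFine hvb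
  refine ⟨_, hδ' hau hvb, fun P Q hP hQ => ?_⟩
  have hLPR := hA ((L.append P).append R) (((hfine L hL).append (hfine P hP)).append (hfine R hR))
  have hLQR := hA ((L.append Q).append R) (((hfine L hL).append (hfine Q hQ)).append (hfine R hR))
  simp only [TaggedPartition.riemannSum_append] at hLPR hLQR
  rw [abs_lt] at hLPR hLQR ⊢
  constructor <;> linarith

end HasIntegral

lemma exists_hasIntegral_of_cauchy (huv : u ≤ v)
    (h : ∀ ε > 0, ∃ δ, IsGauge K u v δ ∧ ∀ P Q : TaggedPartition K u v, P.IsFine δ → Q.IsFine δ →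
      |riemannSum f G P - riemannSum f G Q| < ε) :
    ∃ A, HasIntegral f G u v A := by
  choose δ hδ hcauchy using fun n : ℕ => h (1 / (n + 1)) Nat.one_div_pos_of_nat
  obtain ⟨Δ, hΔ, hΔδ⟩ := IsGauge.exists_seq_refining hδ
  choose P hP using fun n => (hΔ n).exists_isFine huv
  have hPδ : ∀ N n, N ≤ n → (P n).IsFine (δ N) := fun N n hn => (hP n).mono (hΔδ N n hn)
  have hcs : CauchySeq fun n => riemannSum f G (P n) :=
    cauchySeq_of_le_tendsto_0 _ (fun n m N hn hm => (hcauchy N _ _ (hPδ N n hn) (hPδ N m hm)).le)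
      tendsto_one_div_add_atTop_nhds_zero_nat
  obtain ⟨A, hA⟩ := cauchySeq_tendsto_of_complete hcs
  refine ⟨A, fun ε hε => ?_⟩
  obtain ⟨N, hN⟩ := exists_nat_one_div_lt hε
  refine ⟨δ N, hδ N, fun Q hQ => lt_of_le_of_lt ?_ hN⟩
  exact le_of_tendsto (tendsto_const_nhds.sub hA).abs
    (eventually_atTop.2 ⟨N, fun n hn => (hcauchy N Q (P n) hQ (hPδ N n hn)).le⟩)

namespace HasIntegral

lemma exists_of_subset (hf : HasIntegral f G a b A) (hau : a ≤ u) (huv : u ≤ v) (hvb : v ≤ b) :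
    ∃ B, HasIntegral f G u v B :=
  exists_hasIntegral_of_cauchy huv fun _ hε => hf.cauchy_of_subset hau huv hvb hε

lemma ksIntegral_sub_ksIntegral (hf : HasIntegral f G a b A) (hau : a ≤ u) (huv : u ≤ v)
    (hvb : v ≤ b) :
    ksIntegral f G a v - ksIntegral f G a u = ksIntegral f G u v - f u * G u := by
  obtain ⟨B, hB⟩ := hf.exists_of_subset le_rfl hau (huv.trans hvb)
  obtain ⟨C, hC⟩ := hf.exists_of_subset hau huv hvb
  obtain ⟨D, hD⟩ := hf.exists_of_subset le_rfl (hau.trans huv) hvb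
  rw [hB.ksIntegral_eq hau, hC.ksIntegral_eq huv, hD.ksIntegral_eq (hau.trans huv),
    hB.add_adjacent hC hD hau huv]
  ring

lemma abs_ksIntegral_sub_le (hf : HasIntegral f G a b A) (hg : HasIntegral g G a b B)
    (hG : Monotone G) (hdom : ∀ x, |f x| ≤ g x) (hau : a ≤ u) (huv : u ≤ v) (hvb : v ≤ b) :
    |ksIntegral f G a v - ksIntegral f G a u| ≤ ksIntegral g G a v - ksIntegral g G a u := by
  obtain ⟨C, hC⟩ := hf.exists_of_subset hau huv hvb
  obtain ⟨D, hD⟩ := hg.exists_of_subset hau huv hvb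
  rw [hf.ksIntegral_sub_ksIntegral hau huv hvb, hg.ksIntegral_sub_ksIntegral hau huv hvb,
    hC.ksIntegral_eq huv, hD.ksIntegral_eq huv]
  exact hC.abs_sub_le_of_abs_le hD huv hG hdom

end HasIntegral

end Integral

section SaksHenstock

variable {K : Type*} [LinearOrder K] [TopologicalSpace K] [OrderTopology K] [CompactIccSpace K]
  {f G : K → ℝ} {a b u v : K} {A : ℝ} {δ : K → Set K}

lemma HasIntegral.exists_isFine_near_ksIntegral (hf : HasIntegral f G a b A)
    (hδ : IsGauge K a b δ) (hau : a ≤ u) (huv : u ≤ v) (hvb : v ≤ b) {η : ℝ} (hη : 0 < η) :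
    ∃ Q : TaggedPartition K u v, Q.IsFine δ ∧ |riemannSum f G Q - ksIntegral f G u v| < η := by
  obtain ⟨B, hB⟩ := hf.exists_of_subset hau huv hvb
  obtain ⟨δ', hδ', hQB⟩ := hB η hη
  obtain ⟨Q, hQ⟩ := ((hδ.restrict (Set.Icc_subset_Icc hau hvb)).inter hδ').exists_isFine huv
  rw [hB.ksIntegral_eq huv]
  exact ⟨Q, hQ.mono fun _ => Set.inter_subset_left.trans Set.inter_subset_left,
    hQB Q (hQ.mono fun _ => Set.inter_subset_right)⟩

variable (hA : HasIntegral f G a b A) (hδ : IsGauge K a b δ)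
include hA hδ

/-- Each piece of `P` outside `E` is replaced by a fine partition whose Riemann sum is within `η`
of its integral; `e i` is the resulting error on the `i`-th piece. -/
lemma HasIntegral.exists_isFine_sub_eq_sum (P : TaggedPartition K a b) (hP : P.IsFine δ)
    (E : Finset ℕ) {η : ℝ} (hη : 0 < η) :
    ∃ P' : TaggedPartition K a b, P'.IsFine δ ∧ ∃ e : ℕ → ℝ,
      riemannSum f G P' - A = ∑ i ∈ Finset.range P.n, e i ∧
      (∀ i < P.n, i ∈ E → e i = f (P.t (i + 1)) * (G (P.x (i + 1)) - G (P.x i))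
        - (ksIntegral f G a (P.x (i + 1)) - ksIntegral f G a (P.x i))) ∧
      ∀ i < P.n, i ∉ E → |e i| < η := by
  set F := ksIntegral f G a
  have hx : ∀ {i}, i < P.n → a ≤ P.x i ∧ P.x i ≤ P.x (i + 1) ∧ P.x (i + 1) ≤ b := fun hi =>
    ⟨(P.x_mem_Icc hi.le).1, P.mono _ hi, (P.x_mem_Icc hi).2⟩
  have hΔF : ∀ {i}, i < P.n → F (P.x (i + 1)) - F (P.x i)
      = ksIntegral f G (P.x i) (P.x (i + 1)) - f (P.x i) * G (P.x i) := fun hi =>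
    hA.ksIntegral_sub_ksIntegral (hx hi).1 (hx hi).2.1 (hx hi).2.2
  have hFA : ∑ i ∈ Finset.range P.n, (F (P.x (i + 1)) - F (P.x i)) = A - f a * G a := by
    rw [Finset.sum_range_sub (fun i => F (P.x i)), P.x_last, P.x_zero]
    rw [show F b = A from hA.ksIntegral_eq P.left_le_right,
      show F a = f a * G a from (hasIntegral_self f G a).ksIntegral_eq le_rfl]
  let err : ℕ → ℝ → ℝ := fun i r => r - f (P.x i) * G (P.x i) - (F (P.x (i + 1)) - F (P.x i))
  obtain ⟨P', hP', r, hr, hP'r⟩ := TaggedPartition.exists_isFine_concat f G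
    (p := fun i r => (i ∈ E → err i r = f (P.t (i + 1)) * (G (P.x (i + 1)) - G (P.x i))
      - (F (P.x (i + 1)) - F (P.x i))) ∧ (i ∉ E → |err i r| < η)) P.x_zero P.x_last
    fun i hi => by
      by_cases hiE : i ∈ E
      · refine ⟨.single (P.mono i hi) (P.tag_mem i hi), TaggedPartition.isFine_single.mpr
          (hP i hi), fun _ => ?_, fun h => absurd hiE h⟩
        simp only [err, TaggedPartition.riemannSum_single]
        ring
      · obtain ⟨Q, hQ, hQη⟩ :=
          hA.exists_isFine_near_ksIntegral hδ (hx hi).1 (hx hi).2.1 (hx hi).2.2 hη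
        refine ⟨Q, hQ, fun h => absurd h hiE, fun _ => ?_⟩
        simp only [err, hΔF hi]
        rwa [sub_sub_sub_cancel_right]
  refine ⟨P', hP', fun i => err i (r i), ?_, fun i hi => (hr i hi).1, fun i hi => (hr i hi).2⟩
  simp only [err, Finset.sum_sub_distrib, hFA, hP'r]
  ring

variable {ε : ℝ} (hε : ∀ P : TaggedPartition K a b, P.IsFine δ → |riemannSum f G P - A| < ε)
include hε

/-- The Saks–Henstock lemma, for a set `E` of pieces of `P`. -/
lemma HasIntegral.abs_sum_sub_ksIntegral_le (P : TaggedPartition K a b) (hP : P.IsFine δ)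
    {E : Finset ℕ} (hE : E ⊆ Finset.range P.n) :
    |∑ i ∈ E, (f (P.t (i + 1)) * (G (P.x (i + 1)) - G (P.x i))
        - (ksIntegral f G a (P.x (i + 1)) - ksIntegral f G a (P.x i)))| ≤ ε := by
  refine le_of_forall_pos_lt_add fun η hη => ?_
  obtain ⟨P', hP', e, hsum, heE, hrest⟩ :=
    hA.exists_isFine_sub_eq_sum hδ P hP E (η := η / (P.n + 1)) (by positivity)
  have hsplit : ∑ i ∈ E, (f (P.t (i + 1)) * (G (P.x (i + 1)) - G (P.x i))
        - (ksIntegral f G a (P.x (i + 1)) - ksIntegral f G a (P.x i)))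
      = (riemannSum f G P' - A) - ∑ i ∈ Finset.range P.n \ E, e i := by
    rw [hsum, ← Finset.sum_sdiff hE,
      Finset.sum_congr rfl fun i hi => (heE i (Finset.mem_range.mp (hE hi)) hi).symm]
    ring
  have hrest : |∑ i ∈ Finset.range P.n \ E, e i| ≤ P.n * (η / (P.n + 1)) := calc
    _ ≤ ∑ i ∈ Finset.range P.n \ E, |e i| := Finset.abs_sum_le_sum_abs _ _
    _ ≤ ∑ i ∈ Finset.range P.n, η / (P.n + 1) := by
      refine (Finset.sum_le_sum fun i hi => ?_).trans (Finset.sum_le_sum_of_subset_of_nonneg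
        Finset.sdiff_subset fun _ _ _ => by positivity)
      obtain ⟨hi, hiE⟩ := Finset.mem_sdiff.mp hi
      exact (hrest i (Finset.mem_range.mp hi) hiE).le
    _ = P.n * (η / (P.n + 1)) := by simp
  have hnη : P.n * (η / (P.n + 1)) < η := by
    rw [mul_div_assoc', div_lt_iff₀ (by positivity)]
    nlinarith
  rw [hsplit]
  linarith [abs_sub (riemannSum f G P' - A) (∑ i ∈ Finset.range P.n \ E, e i), hε P' hP']

/-- The Saks–Henstock lemma. -/
lemma HasIntegral.sum_abs_sub_ksIntegral_le (P : TaggedPartition K a b) (hP : P.IsFine δ) :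
    ∑ i ∈ Finset.range P.n, |f (P.t (i + 1)) * (G (P.x (i + 1)) - G (P.x i))
        - (ksIntegral f G a (P.x (i + 1)) - ksIntegral f G a (P.x i))| ≤ 2 * ε :=
  Finset.sum_abs_le_two_mul _ _ fun _ hE => hA.abs_sum_sub_ksIntegral_le hδ hε P hP hE

end SaksHenstock

theorem HasIntegral.hasIntegral_abs {K : Type*} [LinearOrder K] [TopologicalSpace K]
    [OrderTopology K] [CompactIccSpace K] {f G : K → ℝ} {a b : K} {A : ℝ}
    (hf : HasIntegral f G a b A) (hG : Monotone G) (hab : a ≤ b)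
    (hV : BddAbove (varSums (ksIntegral f G a) a b)) :
    HasIntegral (fun x => |f x|) G a b (|f a| * G a + sSup (varSums (ksIntegral f G a) a b)) := by
  set F := ksIntegral f G a
  intro ε hε
  obtain ⟨_, ⟨m, y, hy0, hym, hy, rfl⟩, hTy⟩ := exists_lt_of_lt_csSup (varSums_nonempty F hab)
    (sub_lt_self (sSup (varSums F a b)) (half_pos hε))
  obtain ⟨δ, hδ, hδA⟩ := hf (ε / 4) (by positivity)
  obtain ⟨δ', hδ', hδ'δ, hsep⟩ := hδ.exists_separating ((Finset.range (m + 1)).image y)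
  refine ⟨δ', hδ', fun P hP => ?_⟩
  set Q := P.splitAtTags
  have hQ : Q.IsFine δ := (hP.mono hδ'δ).splitAtTags
  have hyQ : ∀ j ≤ m, ∃ i, i ≤ Q.n ∧ Q.x i = y j := fun j hj =>
    P.exists_splitAtTags_x_eq hP (hy0 ▸ hym ▸ mem_Icc_of_le_succ hy hj) fun t =>
      hsep t (y j) (Finset.mem_image_of_mem y (Finset.mem_range.mpr (by omega)))
  have hlow := hTy.trans_le (sum_abs_sub_le_of_refinement F Q.mono hy hyQ)
  have hup := le_csSup hV ⟨Q.n, Q.x, Q.x_zero, Q.x_last, Q.mono, rfl⟩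
  have hSH := hf.sum_abs_sub_ksIntegral_le hδ hδA Q hQ
  have hclose := abs_riemannSum_abs_sub_le (f := f) hG F Q
  rw [P.riemannSum_splitAtTags] at hclose
  rw [abs_le] at hclose
  rw [abs_lt]
  constructor <;> linarith

theorem abs_integrable_of_dominated_general {K : Type*} [LinearOrder K] [TopologicalSpace K]
    [OrderTopology K] [CompactSpace K] [BoundedOrder K] (G f g : K → ℝ)
    (hGmono : Monotone G)
    (hf : ∃ A, HasIntegral f G (⊥ : K) ⊤ A) (hg : ∃ B, HasIntegral g G (⊥ : K) ⊤ B)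
    (hdom : ∀ x : K, |f x| ≤ g x) :
    ∃ C, HasIntegral (fun x => |f x|) G (⊥ : K) ⊤ C := by
  have : CompactIccSpace K := ⟨fun {_ _} => isClosed_Icc.isCompact⟩
  obtain ⟨A, hA⟩ := hf
  obtain ⟨B, hB⟩ := hg
  exact ⟨_, hA.hasIntegral_abs hGmono bot_le <| bddAbove_varSums_of_abs_sub_le
    fun _ _ hu huv hv => hA.abs_ksIntegral_sub_le hB hGmono hdom hu huv hv⟩

theorem abs_integrable_of_dominated {K : Type*} [LinearOrder K] [TopologicalSpace K]
    [OrderTopology K] [CompactSpace K] [BoundedOrder K] (G f g : K → ℝ)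
    (hGmono : Monotone G) (hGam : Amenable G)
    (hf : ∃ A, HasIntegral f G (⊥ : K) ⊤ A) (hg : ∃ B, HasIntegral g G (⊥ : K) ⊤ B)
    (hdom : ∀ x : K, |f x| ≤ g x) :
    ∃ C, HasIntegral (fun x => |f x|) G (⊥ : K) ⊤ C :=
  abs_integrable_of_dominated_general G f g hGmono hf hg hdom
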